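/- In dimension d = 1, for any real-valued random variable θ̂ and any θ₀ ∈ ℝ, the general orthant median bias equals the usual median bias: OMB(law of θ̂ − θ₀) = max(0, 1/2 − min{P(θ̂ − θ₀ ≥ 0), P(θ̂ − θ₀ ≤ 0)}). -/
import Mathlib


open MeasureTheory ProbabilityTheory

/-- Coordinatewise sign vector of `x ∈ ℝ^d`, valued in `{−1,0,1}^d`. -/
noncomputable def signVec {d : ℕ} (x : Fin d → ℝ) : Fin d → SignType :=
  fun j => SignType.sign (x j)

/-- The mass that `μ` gives to the set of points with sign pattern `η`. -/
noncomputable def sgnMass {d : ℕ} (μ : Measure (Fin d → ℝ)) (η : Fin d → SignType) : ℝ :=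
  (μ {x | signVec x = η}).toReal

/-- `ν` is obtained from `μ` by an elementary operation: a mass `q` is moved from the sign
pattern `η ∈ U_d \ V_d` to a sign pattern `η′` with `η ⪯_s η′`. -/
def ElemOp {d : ℕ} (μ ν : Measure (Fin d → ℝ)) : Prop :=
  ∃ (q : ℝ) (η η' : Fin d → SignType),
    0 ≤ q ∧ (∃ j, η j = 0) ∧ (∀ j, η j ≠ 0 → η' j = η j) ∧
    (∀ γ, γ ≠ η → γ ≠ η' → sgnMass ν γ = sgnMass μ γ) ∧
    q ≤ sgnMass μ η ∧
    sgnMass ν η = sgnMass μ η - q ∧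
    sgnMass ν η' = sgnMass μ η' + q

/-- `μ ⪯_MCH ν` : `ν` is obtained from `μ` by a finite sequence of elementary operations. -/
def MCHle {d : ℕ} (μ ν : Measure (Fin d → ℝ)) : Prop :=
  Relation.ReflTransGen ElemOp μ ν

/-- A measure on `ℝ^d` is MCH if it puts no mass on the coordinate hyperplanes. -/
def IsMCH {d : ℕ} (ν : Measure (Fin d → ℝ)) : Prop :=
  ν {x | ∃ j, x j = 0} = 0

/-- The element of `V_d = {−1,1}^d` associated with `b : Fin d → Bool`. -/
def orthSign {d : ℕ} (b : Fin d → Bool) : Fin d → SignType :=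
  fun j => if b j then 1 else -1

/-- The general orthant median bias `OMB(μ)`. -/
noncomputable def OMB {d : ℕ} (μ : Measure (Fin d → ℝ)) : ℝ :=
  sInf {r | ∃ ν : Measure (Fin d → ℝ), IsProbabilityMeasure ν ∧ IsMCH ν ∧ MCHle μ ν ∧
    r = 2 ^ (d - 1) * max 0 (1 / 2 ^ d - ⨅ b : Fin d → Bool, sgnMass ν (orthSign b))}

namespace OMBaux

def pat (s : SignType) : Fin 1 → SignType := fun _ => s

lemma eq_pat (η : Fin 1 → SignType) : η = pat (η 0) :=
  funext fun j => congrArg η (Subsingleton.elim j 0)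

lemma pat_inj {s s' : SignType} (h : pat s = pat s') : s = s' := congrFun h 0

lemma signT_set_meas (s : SignType) : MeasurableSet {t : ℝ | SignType.sign t = s} := by
  cases s
  · convert measurableSet_singleton (0:ℝ) using 1
    ext t; simp [sign_eq_zero_iff]
  · convert measurableSet_Iio (a := (0:ℝ)) using 1
    ext t; simp [sign_eq_neg_one_iff]
  · convert measurableSet_Ioi (a := (0:ℝ)) using 1
    ext t; simp [sign_eq_one_iff]

lemma sgnSet_eq (s : SignType) :
    {x : Fin 1 → ℝ | signVec x = pat s}
      = (fun x : Fin 1 → ℝ => x 0) ⁻¹' {t | SignType.sign t = s} := by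
  ext x
  constructor
  · intro h; exact congrFun h 0
  · intro h
    exact funext fun j => by rw [Subsingleton.elim j 0]; exact h

lemma sgnSet_meas (s : SignType) : MeasurableSet {x : Fin 1 → ℝ | signVec x = pat s} := by
  rw [sgnSet_eq]; exact (measurable_pi_apply 0) (signT_set_meas s)

lemma sgnMass_nonneg {d : ℕ} (μ : Measure (Fin d → ℝ)) (η : Fin d → SignType) :
    0 ≤ sgnMass μ η := ENNReal.toReal_nonneg

def cst (t : ℝ) : Fin 1 → ℝ := fun _ => t

noncomputable def nu3 (α β γ : ℝ) : Measure (Fin 1 → ℝ) :=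
  ENNReal.ofReal α • Measure.dirac (cst (-1)) + ENNReal.ofReal β • Measure.dirac (cst 0) +
    ENNReal.ofReal γ • Measure.dirac (cst 1)

lemma nu3_apply (α β γ : ℝ) {S : Set (Fin 1 → ℝ)} (hS : MeasurableSet S) :
    nu3 α β γ S = ENNReal.ofReal α * S.indicator 1 (cst (-1))
      + ENNReal.ofReal β * S.indicator 1 (cst 0) + ENNReal.ofReal γ * S.indicator 1 (cst 1) := by
  simp [nu3, Measure.add_apply, Measure.smul_apply, Measure.dirac_apply' _ hS, smul_eq_mul]

lemma cst_mem_iff (t : ℝ) (s : SignType) :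
    cst t ∈ {x : Fin 1 → ℝ | signVec x = pat s} ↔ SignType.sign t = s := by
  rw [sgnSet_eq]; exact Iff.rfl

lemma sign_neg_one : SignType.sign (-1 : ℝ) = -1 := by rw [sign_eq_neg_one_iff]; norm_num
lemma sign_one : SignType.sign (1 : ℝ) = 1 := by rw [sign_eq_one_iff]; norm_num

lemma nu3_sgnMass {α β γ : ℝ} (hα : 0 ≤ α) (hβ : 0 ≤ β) (hγ : 0 ≤ γ) (s : SignType) :
    sgnMass (nu3 α β γ) (pat s) =
      if s = -1 then α else if s = 0 then β else γ := by
  unfold sgnMass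
  rw [nu3_apply _ _ _ (sgnSet_meas s)]
  cases s
  · rw [Set.indicator_of_notMem (by rw [cst_mem_iff]; simp [sign_neg_one]),
      Set.indicator_of_mem (by rw [cst_mem_iff]; simp) , 
      Set.indicator_of_notMem (by rw [cst_mem_iff]; simp [sign_one])]
    simp [ENNReal.toReal_ofReal hβ]
  · rw [Set.indicator_of_mem (by rw [cst_mem_iff]; exact sign_neg_one),
      Set.indicator_of_notMem (by rw [cst_mem_iff]; simp),
      Set.indicator_of_notMem (by rw [cst_mem_iff]; simp [sign_one])]
    simp [ENNReal.toReal_ofReal hα]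
  · rw [Set.indicator_of_notMem (by rw [cst_mem_iff]; simp [sign_neg_one]),
      Set.indicator_of_notMem (by rw [cst_mem_iff]; simp),
      Set.indicator_of_mem (by rw [cst_mem_iff]; exact sign_one)]
    simp [ENNReal.toReal_ofReal hγ]

lemma nu3_prob {α β γ : ℝ} (hα : 0 ≤ α) (hβ : 0 ≤ β) (hγ : 0 ≤ γ) (hsum : α + β + γ = 1) :
    IsProbabilityMeasure (nu3 α β γ) := by
  constructor
  rw [nu3_apply _ _ _ MeasurableSet.univ]
  simp only [Set.indicator_univ, Pi.one_apply, mul_one]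
  rw [← ENNReal.ofReal_add hα hβ, ← ENNReal.ofReal_add (by linarith) hγ, hsum,
    ENNReal.ofReal_one]

lemma zeroSet_eq : {x : Fin 1 → ℝ | ∃ j, x j = 0} = (fun x : Fin 1 → ℝ => x 0) ⁻¹' {0} := by
  ext x
  constructor
  · rintro ⟨j, hj⟩
    show x 0 ∈ ({0} : Set ℝ)
    rw [Set.mem_singleton_iff, Subsingleton.elim (0 : Fin 1) j]; exact hj
  · intro h; exact ⟨0, h⟩

lemma iInf_bool (g : (Fin 1 → Bool) → ℝ) :
    ⨅ b, g b = min (g (fun _ => false)) (g (fun _ => true)) := by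
  apply le_antisymm
  · exact le_min (ciInf_le (Set.finite_range g).bddBelow _)
      (ciInf_le (Set.finite_range g).bddBelow _)
  · refine le_ciInf fun b => ?_
    have hb : b = fun _ => b 0 := funext fun j => congrArg b (Subsingleton.elim j 0)
    rcases Bool.eq_false_or_eq_true (b 0) with h | h
    · rw [hb, h]; exact min_le_right _ _
    · rw [hb, h]; exact min_le_left _ _


lemma nu3_neg {α β γ : ℝ} (hα : 0 ≤ α) (hβ : 0 ≤ β) (hγ : 0 ≤ γ) :
    sgnMass (nu3 α β γ) (pat (-1)) = α := by
  rw [nu3_sgnMass hα hβ hγ, if_pos rfl]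

lemma nu3_zero {α β γ : ℝ} (hα : 0 ≤ α) (hβ : 0 ≤ β) (hγ : 0 ≤ γ) :
    sgnMass (nu3 α β γ) (pat 0) = β := by
  rw [nu3_sgnMass hα hβ hγ, if_neg (by decide), if_pos rfl]

lemma nu3_pos {α β γ : ℝ} (hα : 0 ≤ α) (hβ : 0 ≤ β) (hγ : 0 ≤ γ) :
    sgnMass (nu3 α β γ) (pat 1) = γ := by
  rw [nu3_sgnMass hα hβ hγ, if_neg (by decide), if_neg (by decide)]

lemma nu3_mch (α γ : ℝ) : IsMCH (nu3 α 0 γ) := by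
  unfold IsMCH
  rw [zeroSet_eq, nu3_apply _ _ _ ((measurable_pi_apply 0) (measurableSet_singleton 0))]
  have h1 : cst (-1) ∉ (fun x : Fin 1 → ℝ => x 0) ⁻¹' ({0} : Set ℝ) := by
    intro h
    have : (-1 : ℝ) = 0 := h
    norm_num at this
  have h2 : cst 1 ∉ (fun x : Fin 1 → ℝ => x 0) ⁻¹' ({0} : Set ℝ) := by
    intro h
    have : (1 : ℝ) = 0 := h
    norm_num at this
  rw [Set.indicator_of_notMem h1, Set.indicator_of_notMem h2, ENNReal.ofReal_zero,
    zero_mul, mul_zero, mul_zero]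
  simp

lemma elemOp_inv {μ ν : Measure (Fin 1 → ℝ)} (h : ElemOp μ ν) (s : SignType) (hs : s ≠ 0) :
    sgnMass ν (pat s) + sgnMass ν (pat 0) ≤ sgnMass μ (pat s) + sgnMass μ (pat 0) := by
  obtain ⟨q, η, η', hq, ⟨j, hj⟩, -, hoth, hle, hη, hη'⟩ := h
  have hη0 : η = pat 0 := by
    have h00 : η 0 = 0 := by rw [Subsingleton.elim (0 : Fin 1) j]; exact hj
    exact (eq_pat η).trans (by rw [h00])
  rw [hη0] at hη hle hoth
  have hps0 : pat s ≠ pat 0 := fun hc => hs (pat_inj hc)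
  by_cases h0 : η' = pat 0
  · rw [h0] at hη'
    have hs' : sgnMass ν (pat s) = sgnMass μ (pat s) :=
      hoth _ hps0 (by rw [h0]; exact hps0)
    linarith
  · by_cases hse : η' = pat s
    · rw [hse] at hη'
      linarith
    · have hs' : sgnMass ν (pat s) = sgnMass μ (pat s) :=
        hoth _ hps0 (fun hc => hse hc.symm)
      linarith

lemma mchle_inv {μ ν : Measure (Fin 1 → ℝ)} (h : MCHle μ ν) (s : SignType) (hs : s ≠ 0) :
    sgnMass ν (pat s) + sgnMass ν (pat 0) ≤ sgnMass μ (pat s) + sgnMass μ (pat 0) := by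
  induction h with
  | refl => exact le_rfl
  | tail _ hbc ih => exact le_trans (elemOp_inv hbc s hs) ih

lemma max0_eq {x y : ℝ} (hxy : x = y ∨ (x ≤ 0 ∧ y ≤ 0)) : max 0 x = max 0 y := by
  rcases hxy with h | ⟨h1, h2⟩
  · rw [h]
  · rw [max_eq_left h1, max_eq_left h2]

lemma key_arith (A B C a : ℝ) (hA : 0 ≤ A) (hB : 0 ≤ B) (hC : 0 ≤ C)
    (hsum : A + B + C = 1) (hadef : a = min B (max 0 (1/2 - A))) :
    max 0 (1/2 - min (B + C) (A + B)) = max 0 (1/2 - min (A + a) (C + (B - a))) := by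
  subst hadef
  rcases le_total (0:ℝ) (1/2 - A) with h2 | h2
  · rcases le_total B (1/2 - A) with h1 | h1
    · rw [max_eq_right h2, min_eq_left h1,
        min_eq_right (show A + B ≤ B + C by linarith),
        min_eq_left (show A + B ≤ C + (B - B) by linarith)]
    · rw [max_eq_right h2, min_eq_right h1]
      apply max0_eq
      right
      constructor
      · have := le_min (show (1:ℝ)/2 ≤ B + C by linarith)
          (show (1:ℝ)/2 ≤ A + B by linarith)
        linarith
      · have := le_min (show (1:ℝ)/2 ≤ A + (1/2 - A) by linarith)
          (show (1:ℝ)/2 ≤ C + (B - (1/2 - A)) by linarith)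
        linarith
  · rw [max_eq_left h2, min_eq_right hB,
      min_eq_left (show B + C ≤ A + B by linarith),
      min_eq_right (show C + (B - 0) ≤ A + 0 by linarith)]
    apply max0_eq
    left
    ring

lemma iInf_orth {ν : Measure (Fin 1 → ℝ)} :
    ⨅ b : Fin 1 → Bool, sgnMass ν (orthSign b)
      = min (sgnMass ν (pat (-1))) (sgnMass ν (pat 1)) := by
  rw [iInf_bool]
  rfl

end OMBaux

open OMBaux

/-- in dimension `d = 1`, the general orthant median bias coincides with the
usual median bias of `θ̂` about `θ₀`. -/
theorem OMB_one_dim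
    {Ω : Type*} [MeasurableSpace Ω] (P : Measure Ω) [IsProbabilityMeasure P]
    (θ : Ω → ℝ) (hθ : Measurable θ) (θ₀ : ℝ) :
    OMB (Measure.map (fun ω (_ : Fin 1) => θ ω - θ₀) P)
      = max 0 (1 / 2 -
          min (P {ω | 0 ≤ θ ω - θ₀}).toReal (P {ω | θ ω - θ₀ ≤ 0}).toReal) := by
  classical
  have hF : Measurable (fun ω (_ : Fin 1) => θ ω - θ₀) :=
    measurable_pi_lambda _ fun _ => hθ.sub measurable_const
  have hPm : ∀ s : SignType, MeasurableSet {ω | SignType.sign (θ ω - θ₀) = s} :=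
    fun s => (hθ.sub measurable_const) (signT_set_meas s)
  have hmass : ∀ s : SignType,
      sgnMass (Measure.map (fun ω (_ : Fin 1) => θ ω - θ₀) P) (pat s)
        = (P {ω | SignType.sign (θ ω - θ₀) = s}).toReal := by
    intro s
    unfold sgnMass
    rw [Measure.map_apply hF (sgnSet_meas s), sgnSet_eq]
    rfl
  set A : ℝ := (P {ω | SignType.sign (θ ω - θ₀) = -1}).toReal with hAdef
  set B : ℝ := (P {ω | SignType.sign (θ ω - θ₀) = 0}).toReal with hBdef
  set C : ℝ := (P {ω | SignType.sign (θ ω - θ₀) = 1}).toReal with hCdef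
  have hA : 0 ≤ A := ENNReal.toReal_nonneg
  have hB : 0 ≤ B := ENNReal.toReal_nonneg
  have hC : 0 ≤ C := ENNReal.toReal_nonneg
  have hdisj : ∀ s s' : SignType, s ≠ s' →
      Disjoint {ω | SignType.sign (θ ω - θ₀) = s} {ω | SignType.sign (θ ω - θ₀) = s'} := by
    intro s s' hss
    rw [Set.disjoint_left]
    intro ω h1 h2
    simp only [Set.mem_setOf_eq] at h1 h2
    exact hss (h1.symm.trans h2)
  have hU0 : {ω | 0 ≤ θ ω - θ₀}
      = {ω | SignType.sign (θ ω - θ₀) = 0} ∪ {ω | SignType.sign (θ ω - θ₀) = 1} := by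
    ext ω
    simp only [Set.mem_union, Set.mem_setOf_eq, sign_eq_zero_iff, sign_eq_one_iff]
    constructor
    · intro h
      rcases h.lt_or_eq with h' | h'
      · exact Or.inr h'
      · exact Or.inl h'.symm
    · rintro (h | h) <;> linarith
  have hU1 : {ω | θ ω - θ₀ ≤ 0}
      = {ω | SignType.sign (θ ω - θ₀) = -1} ∪ {ω | SignType.sign (θ ω - θ₀) = 0} := by
    ext ω
    simp only [Set.mem_union, Set.mem_setOf_eq, sign_eq_neg_one_iff, sign_eq_zero_iff]
    constructor
    · intro h
      rcases h.lt_or_eq with h' | h'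
      · exact Or.inl h'
      · exact Or.inr h'
    · rintro (h | h) <;> linarith
  have hBC : (P {ω | 0 ≤ θ ω - θ₀}).toReal = B + C := by
    rw [hU0, measure_union (hdisj 0 1 (by decide)) (hPm 1),
      ENNReal.toReal_add (measure_ne_top _ _) (measure_ne_top _ _)]
  have hAB : (P {ω | θ ω - θ₀ ≤ 0}).toReal = A + B := by
    rw [hU1, measure_union (hdisj (-1) 0 (by decide)) (hPm 0),
      ENNReal.toReal_add (measure_ne_top _ _) (measure_ne_top _ _)]
  have hcov : (Set.univ : Set Ω) = {ω | SignType.sign (θ ω - θ₀) = -1}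
      ∪ ({ω | SignType.sign (θ ω - θ₀) = 0} ∪ {ω | SignType.sign (θ ω - θ₀) = 1}) := by
    ext ω
    simp only [Set.mem_univ, true_iff, Set.mem_union, Set.mem_setOf_eq]
    rcases lt_trichotomy (θ ω - θ₀) 0 with h | h | h
    · exact Or.inl (sign_eq_neg_one_iff.mpr h)
    · exact Or.inr (Or.inl (sign_eq_zero_iff.mpr h))
    · exact Or.inr (Or.inr (sign_eq_one_iff.mpr h))
  have hsum : A + B + C = 1 := by
    have e : P ({ω | SignType.sign (θ ω - θ₀) = -1}
        ∪ ({ω | SignType.sign (θ ω - θ₀) = 0} ∪ {ω | SignType.sign (θ ω - θ₀) = 1}))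
        = P {ω | SignType.sign (θ ω - θ₀) = -1}
          + (P {ω | SignType.sign (θ ω - θ₀) = 0} + P {ω | SignType.sign (θ ω - θ₀) = 1}) := by
      rw [measure_union (by
          rw [Set.disjoint_union_right]
          exact ⟨hdisj (-1) 0 (by decide), hdisj (-1) 1 (by decide)⟩)
        ((hPm 0).union (hPm 1)),
        measure_union (hdisj 0 1 (by decide)) (hPm 1)]
    rw [← hcov, measure_univ] at e
    have e' := congrArg ENNReal.toReal e
    rw [ENNReal.toReal_one, ENNReal.toReal_add (measure_ne_top _ _)
        (ENNReal.add_ne_top.mpr ⟨measure_ne_top _ _, measure_ne_top _ _⟩),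
      ENNReal.toReal_add (measure_ne_top _ _) (measure_ne_top _ _)] at e'
    rw [← hAdef, ← hBdef, ← hCdef] at e'
    linarith
  rw [hBC, hAB]
  set a : ℝ := min B (max 0 (1/2 - A)) with hadef
  have ha0 : 0 ≤ a := le_min hB (le_max_left _ _)
  have haB : a ≤ B := min_le_left _ _
  have hAa : 0 ≤ A + a := by linarith
  have hBa : 0 ≤ B - a := by linarith
  have hCBa : 0 ≤ C + (B - a) := by linarith
  unfold OMB
  apply IsLeast.csInf_eq
  constructor
  · -- membership
    refine ⟨nu3 (A + a) 0 (C + (B - a)),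
      nu3_prob hAa le_rfl hCBa (by linarith), nu3_mch _ _, ?_, ?_⟩
    · -- MCHle via two elementary operations
      have op1 : ElemOp (Measure.map (fun ω (_ : Fin 1) => θ ω - θ₀) P)
          (nu3 (A + a) (B - a) C) := by
        refine ⟨a, pat 0, pat (-1), ha0, ⟨0, rfl⟩, fun j h => absurd rfl h, ?_, ?_, ?_, ?_⟩
        · intro γ hγ0 hγn
          have hγ : γ = pat (γ 0) := eq_pat γ
          cases hc : γ 0
          · exact absurd (hγ.trans (by rw [hc]; rfl)) hγ0
          · exact absurd (hγ.trans (by rw [hc]; rfl)) hγn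
          · rw [hγ.trans (by rw [hc]; rfl : pat (γ 0) = pat 1)]
            rw [nu3_pos hAa hBa hC, hmass 1]
        · rw [hmass 0]; exact haB
        · rw [nu3_zero hAa hBa hC, hmass 0]
        · rw [nu3_neg hAa hBa hC, hmass (-1)]
      have op2 : ElemOp (nu3 (A + a) (B - a) C) (nu3 (A + a) 0 (C + (B - a))) := by
        refine ⟨B - a, pat 0, pat 1, hBa, ⟨0, rfl⟩, fun j h => absurd rfl h, ?_, ?_, ?_, ?_⟩
        · intro γ hγ0 hγn
          have hγ : γ = pat (γ 0) := eq_pat γ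
          cases hc : γ 0
          · exact absurd (hγ.trans (by rw [hc]; rfl)) hγ0
          · rw [hγ.trans (by rw [hc]; rfl : pat (γ 0) = pat (-1))]
            rw [nu3_neg hAa le_rfl hCBa, nu3_neg hAa hBa hC]
          · exact absurd (hγ.trans (by rw [hc]; rfl)) hγn
        · rw [nu3_zero hAa hBa hC]
        · rw [nu3_zero hAa le_rfl hCBa, nu3_zero hAa hBa hC]; ring
        · rw [nu3_pos hAa le_rfl hCBa, nu3_pos hAa hBa hC]
      exact Relation.ReflTransGen.head op1 (Relation.ReflTransGen.single op2)
    · -- value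
      rw [iInf_orth, nu3_neg hAa le_rfl hCBa, nu3_pos hAa le_rfl hCBa]
      simp only [Nat.sub_self, pow_zero, one_mul, pow_one]
      exact key_arith A B C a hA hB hC hsum hadef
  · -- lower bound
    rintro r ⟨ν, hprob, hmch, hle, rfl⟩
    have h1 := mchle_inv hle (-1) (by decide)
    rw [hmass (-1), hmass 0] at h1
    have h2 := mchle_inv hle 1 (by decide)
    rw [hmass 1, hmass 0] at h2
    have hz := sgnMass_nonneg ν (pat 0)
    have hx : sgnMass ν (pat (-1)) ≤ A + B := by linarith
    have hy : sgnMass ν (pat 1) ≤ B + C := by linarith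
    rw [iInf_orth]
    simp only [Nat.sub_self, pow_zero, one_mul, pow_one]
    exact max_le_max le_rfl (sub_le_sub_left
      (le_min ((min_le_right _ _).trans hy) ((min_le_left _ _).trans hx)) _)
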